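/- If R is an S-coherent ring, then the intersection of any finite family of S-finite ideals of R is S-finite. -/

import Mathlib

open Function LinearMap

/-- A module `M` is `S`-finite: there is a f.g. submodule `N₀` and `s ∈ S` with `s • M ⊆ N₀`. -/
def SFiniteMod (R : Type*) [CommRing R] (S : Submonoid R)
    (M : Type*) [AddCommGroup M] [Module R M] : Prop :=
  ∃ N₀ : Submodule R M, N₀.FG ∧ ∃ s ∈ S, ∀ m : M, s • m ∈ N₀

/-- A module `M` is `S`-finitely presented: there is an exact sequence
`0 → K → F → M → 0` with `F` finitely generated free and `K` `S`-finite. -/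
def SFinitePres (R : Type*) [CommRing R] (S : Submonoid R)
    (M : Type*) [AddCommGroup M] [Module R M] : Prop :=
  ∃ (n : ℕ) (f : (Fin n → R) →ₗ[R] M), Function.Surjective f ∧
    ∃ K₀ : Submodule R (Fin n → R), K₀.FG ∧ K₀ ≤ LinearMap.ker f ∧
      ∃ s ∈ S, ∀ x ∈ LinearMap.ker f, s • x ∈ K₀

/-- An ideal `I` is `S`-finite. -/
def SFiniteIdeal (R : Type*) [CommRing R] (S : Submonoid R) (I : Ideal R) : Prop :=
  ∃ J : Ideal R, J.FG ∧ J ≤ I ∧ ∃ s ∈ S, ∀ x ∈ I, s * x ∈ J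

/-- `R` is an `S`-coherent ring: every finitely generated ideal is `S`-finitely presented. -/
def SCoherentRing (R : Type*) [CommRing R] (S : Submonoid R) : Prop :=
  ∀ I : Ideal R, I.FG → SFinitePres R S ↥I

/-- `M` is an `S`-coherent module: finitely generated and every finitely generated
submodule is `S`-finitely presented. -/
def SCoherentMod (R : Type*) [CommRing R] (S : Submonoid R)
    (M : Type*) [AddCommGroup M] [Module R M] : Prop :=
  Module.Finite R M ∧ ∀ N : Submodule R M, N.FG → SFinitePres R S ↥N

/-!
For finitely generated `I = (a₁, …, aₚ)` and `J = (b₁, …, b_q)`, the ideal `I ∩ J` is the image,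
under `(x, y) ↦ ∑ xᵢ aᵢ`, of the kernel of `(x, y) ↦ ∑ xᵢ aᵢ - ∑ yⱼ bⱼ : Rᵖ × R^q → I + J`.
Since `I + J` is finitely generated, `S`-coherence together with Schanuel's argument makes that
kernel `S`-finite, hence so is `I ∩ J`. For `S`-finite ideals one intersects their finitely
generated witnesses and multiplies the elements of `S`; finite families follow by induction.
-/

namespace Submodule

variable {R : Type*} [CommRing R] (S : Submonoid R)
variable {M : Type*} [AddCommGroup M] [Module R M]

def SFinite (N : Submodule R M) : Prop :=
  ∃ N₀ : Submodule R M, N₀.FG ∧ N₀ ≤ N ∧ ∃ s ∈ S, ∀ x ∈ N, s • x ∈ N₀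

variable {S}

theorem FG.sFinite {N : Submodule R M} (hN : N.FG) : N.SFinite S :=
  ⟨N, hN, le_rfl, 1, S.one_mem, fun x hx => by simpa using hx⟩

theorem SFinite.map {N : Submodule R M} (hN : N.SFinite S)
    {M' : Type*} [AddCommGroup M'] [Module R M'] (f : M →ₗ[R] M') : (N.map f).SFinite S := by
  obtain ⟨N₀, hfg, hle, s, hs, hsN⟩ := hN
  refine ⟨N₀.map f, hfg.map f, map_mono hle, s, hs, ?_⟩
  rintro _ ⟨x, hx, rfl⟩
  exact ⟨s • x, hsN x hx, map_smul f s x⟩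

theorem SFinite.inf {N₁ N₂ : Submodule R M} (h₁ : N₁.SFinite S) (h₂ : N₂.SFinite S)
    (hfg : ∀ P₁ P₂ : Submodule R M, P₁.FG → P₂.FG → (P₁ ⊓ P₂).SFinite S) :
    (N₁ ⊓ N₂).SFinite S := by
  obtain ⟨P₁, hP₁, hle₁, s₁, hs₁, hsP₁⟩ := h₁
  obtain ⟨P₂, hP₂, hle₂, s₂, hs₂, hsP₂⟩ := h₂
  obtain ⟨P, hP, hle, t, ht, htP⟩ := hfg P₁ P₂ hP₁ hP₂
  refine ⟨P, hP, hle.trans (inf_le_inf hle₁ hle₂), t * s₁ * s₂,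
    S.mul_mem (S.mul_mem ht hs₁) hs₂, fun x ⟨hx₁, hx₂⟩ => ?_⟩
  have hx : (s₁ * s₂) • x ∈ P₁ ⊓ P₂ := by
    constructor
    · rw [mul_comm, mul_smul]
      exact P₁.smul_mem s₂ (hsP₁ x hx₁)
    · rw [mul_smul]
      exact P₂.smul_mem s₁ (hsP₂ x hx₂)
  simpa only [mul_assoc, mul_smul] using htP _ hx

end Submodule

namespace LinearMap

variable {R : Type*} [CommRing R] {S : Submonoid R} {M F G : Type*}
  [AddCommGroup M] [Module R M] [AddCommGroup F] [Module R F] [AddCommGroup G] [Module R G]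

/-- Schanuel's argument: with lifts `φ : G → F`, `ψ : F → G`, every `x ∈ ker g` is
`(x - ψ (φ x)) + ψ (φ x)` with `φ x ∈ ker f`, so `ker g ⊆ range (id - ψ ∘ φ) + ψ (ker f)`. -/
theorem sFinite_ker_of_surjective [Module.Projective R F] [Module.Projective R G]
    [Module.Finite R G] {f : F →ₗ[R] M} (hf : Surjective f) {g : G →ₗ[R] M} (hg : Surjective g)
    (hker : (ker f).SFinite S) : (ker g).SFinite S := by
  obtain ⟨K, hK, hKle, s, hs, hsK⟩ := hker
  obtain ⟨φ, hφ⟩ := Module.projective_lifting_property f g hf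
  obtain ⟨ψ, hψ⟩ := Module.projective_lifting_property g f hg
  have hfφ (x : G) : f (φ x) = g x := congr($hφ x)
  have hgψ (y : F) : g (ψ y) = f y := congr($hψ y)
  set e : G →ₗ[R] G := id - ψ ∘ₗ φ
  refine ⟨range e ⊔ K.map ψ, (e.range_eq_map ▸ Module.Finite.fg_top.map e).sup (hK.map ψ),
    sup_le ?_ ?_, s, hs, fun x hx => ?_⟩
  · rintro _ ⟨x, rfl⟩
    simp [e, hgψ, hfφ]
  · rintro _ ⟨y, hy, rfl⟩
    simpa [hgψ] using hKle hy
  · have hφx : φ x ∈ ker f := by simpa [hfφ] using hx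
    have hsplit : s • x = e (s • x) + ψ (s • φ x) := by simp [e, smul_sub]
    rw [hsplit]
    exact add_mem (Submodule.mem_sup_left ⟨s • x, rfl⟩)
      (Submodule.mem_sup_right ⟨s • φ x, hsK _ hφx, rfl⟩)

theorem map_fst_ker_coprod_neg (A : F →ₗ[R] M) (B : G →ₗ[R] M) :
    (ker (A.coprod (-B))).map (A ∘ₗ fst R F G) = range A ⊓ range B := by
  ext y
  constructor
  · rintro ⟨⟨x, z⟩, hxz, rfl⟩
    have hAB : A x = B z := add_neg_eq_zero.mp (by simpa using hxz)
    exact ⟨⟨x, rfl⟩, ⟨z, hAB.symm⟩⟩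
  · rintro ⟨⟨x, rfl⟩, ⟨z, hz⟩⟩
    exact ⟨(x, z), by simp [hz], rfl⟩

end LinearMap

theorem sFiniteIdeal_iff {R : Type*} [CommRing R] {S : Submonoid R} {I : Ideal R} :
    SFiniteIdeal R S I ↔ I.SFinite S :=
  Iff.rfl

theorem SFinitePres.sFinite_ker {R : Type*} [CommRing R] {S : Submonoid R}
    {M : Type*} [AddCommGroup M] [Module R M] (hM : SFinitePres R S M)
    {G : Type*} [AddCommGroup G] [Module R G] [Module.Projective R G] [Module.Finite R G]
    {g : G →ₗ[R] M} (hg : Surjective g) : (ker g).SFinite S := by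
  obtain ⟨n, f, hf, K, hK, hKle, s, hs, hsK⟩ := hM
  exact sFinite_ker_of_surjective hf hg ⟨K, hK, hKle, s, hs, hsK⟩

namespace SCoherentRing

variable {R : Type*} [CommRing R] {S : Submonoid R}

theorem sFinite_ker (h : SCoherentRing R S) {G : Type*} [AddCommGroup G] [Module R G]
    [Module.Projective R G] [Module.Finite R G] (g : G →ₗ[R] R) : (ker g).SFinite S := by
  have hpres := h (range g) (g.range_eq_map ▸ Module.Finite.fg_top.map g)
  simpa using hpres.sFinite_ker g.surjective_rangeRestrict

theorem sFinite_inf_of_fg (h : SCoherentRing R S) {I J : Ideal R} (hI : I.FG) (hJ : J.FG) :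
    (I ⊓ J).SFinite S := by
  obtain ⟨p, a, rfl⟩ := Submodule.fg_iff_exists_fin_generating_family.mp hI
  obtain ⟨q, b, rfl⟩ := Submodule.fg_iff_exists_fin_generating_family.mp hJ
  let A := Fintype.linearCombination R a
  let B := Fintype.linearCombination R b
  rw [← Fintype.range_linearCombination, ← Fintype.range_linearCombination,
    ← map_fst_ker_coprod_neg A B]
  exact (h.sFinite_ker (A.coprod (-B))).map _

end SCoherentRing

/-- In an S-coherent ring, the intersection of any finite family of S-finite ideals
is S-finite. -/
theorem stmt5 {R : Type*} [CommRing R] (S : Submonoid R)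
    (h : SCoherentRing R S) {ι : Type*} [Fintype ι] (I : ι → Ideal R)
    (hI : ∀ i, SFiniteIdeal R S (I i)) :
    SFiniteIdeal R S (⨅ i, I i) := by
  rw [sFiniteIdeal_iff, ← Finset.inf_univ_eq_iInf]
  exact Finset.inf_induction Module.Finite.fg_top.sFinite
    (fun _ h₁ _ h₂ => h₁.inf h₂ fun _ _ => h.sFinite_inf_of_fg) fun i _ => hI i
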